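/- arXiv:1904.12844 — 9 statements merged into one kernel-verified Lean document; each statement's English description precedes it below -/
import Mathlib

section
/- For every α ∈ (0,1), the solid-torus skew product g_α is injective on [0,1) × D̄, where D̄ = {(y,z) ∈ ℝ² : y² + z² ≤ 1}; that is, if g_α(x,y,z) = g_α(x',y',z') with x, x' ∈ [0,1) and (y,z), (y',z') ∈ D̄, then (x,y,z) = (x',y',z'). -/
open Set Real

/-- The intermittent circle map `T_α` on `[0,1)`. -/
noncomputable def Tmap (α x : ℝ) : ℝ :=
  if x < 1/2 then x * (1 + (2 * x) ^ α) else x - 2 ^ α * (1 - x) ^ (1 + α)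

/-- The solid-torus skew product `g_α`, identifying `𝕊¹` with `[0,1)`. -/
noncomputable def gmap (α : ℝ) (p : ℝ × ℝ × ℝ) : ℝ × ℝ × ℝ :=
  (Tmap α p.1,
   p.2.1 / 10 + Real.cos (2 * π * p.1) / 2,
   p.2.2 / 10 + Real.sin (2 * π * p.1) / 2)

/-- `z ≤ z^α` for `z ∈ [0,1]` and `0 < α ≤ 1`. -/
lemma self_le_rpow {z α : ℝ} (hz0 : 0 ≤ z) (hz1 : z ≤ 1) (hα0 : 0 < α) (hα1 : α ≤ 1) :
    z ≤ z ^ α := by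
  rcases eq_or_lt_of_le hz0 with h | h
  · rw [← h, Real.zero_rpow (ne_of_gt hα0)]
  · calc z = z ^ (1:ℝ) := (Real.rpow_one z).symm
      _ ≤ z ^ α := Real.rpow_le_rpow_of_exponent_ge h hz1 hα1

/-- Strict monotonicity of the first branch. -/
lemma branch1_mono {α a b : ℝ} (hα0 : 0 < α) (ha : 0 ≤ a) (hab : a < b) :
    a * (1 + (2 * a) ^ α) < b * (1 + (2 * b) ^ α) := by
  have h1 : (2 * a) ^ α ≤ (2 * b) ^ α :=
    Real.rpow_le_rpow (by linarith) (by linarith) hα0.le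
  have h2 : (0:ℝ) ≤ (2 * b) ^ α := Real.rpow_nonneg (by linarith) _
  nlinarith

/-- Strict monotonicity of the second branch. -/
lemma branch2_mono {α a b : ℝ} (hα0 : 0 < α) (hab : a < b) (hb : b ≤ 1) :
    a - 2 ^ α * (1 - a) ^ (1 + α) < b - 2 ^ α * (1 - b) ^ (1 + α) := by
  have h1 : (1 - b) ^ (1 + α) < (1 - a) ^ (1 + α) :=
    Real.rpow_lt_rpow (by linarith) (by linarith) (by linarith)
  have h2 : (0:ℝ) < 2 ^ α := Real.rpow_pos_of_pos (by norm_num) _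
  nlinarith

/-- Key identity: `2^α * v^(1+α) = v * (2v)^α` for `v > 0`. -/
lemma key_identity {α v : ℝ} (hv : 0 < v) :
    2 ^ α * v ^ (1 + α) = v * (2 * v) ^ α := by
  rw [Real.rpow_add hv, Real.rpow_one, Real.mul_rpow (by norm_num) hv.le]
  ring

lemma half_le_sq_add_sq (t : ℝ) : 1/2 ≤ (1 - t) ^ 2 + t ^ 2 := by
  nlinarith [sq_nonneg (2 * t - 1)]

/-- In the mixed case, the gap `b - a` lies in `[1/4, 1/2]`. -/
lemma mixed_gap {α a b : ℝ} (hα0 : 0 < α) (hα1 : α < 1)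
    (ha0 : 0 ≤ a) (ha : a < 1/2) (hb : 1/2 ≤ b) (hb1 : b < 1)
    (ht : a * (1 + (2 * a) ^ α) = b - 2 ^ α * (1 - b) ^ (1 + α)) :
    1/4 ≤ b - a ∧ b - a ≤ 1/2 := by
  set t := a * (1 + (2 * a) ^ α) with htdef
  set v := 1 - b with hvdef
  have hv0 : 0 < v := by simp [hvdef]; linarith
  have hv2 : v ≤ 1/2 := by simp [hvdef]; linarith
  have hid : 2 ^ α * v ^ (1 + α) = v * (2 * v) ^ α := key_identity hv0
  have hbt : b - t = v * (2 * v) ^ α := by rw [ht, hid]; ring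
  -- bounds using (2a)^α ≤ 1 and 2a ≤ (2a)^α, similarly for v
  have h2a1 : (2 * a) ^ α ≤ 1 := Real.rpow_le_one (by linarith) (by linarith) hα0.le
  have h2a2 : 2 * a ≤ (2 * a) ^ α := self_le_rpow (by linarith) (by linarith) hα0 hα1.le
  have h2v1 : (2 * v) ^ α ≤ 1 := Real.rpow_le_one (by linarith) (by linarith) hα0.le
  have h2v2 : 2 * v ≤ (2 * v) ^ α := self_le_rpow (by linarith) (by linarith) hα0 hα1.le
  have h2ann : (0:ℝ) ≤ (2 * a) ^ α := Real.rpow_nonneg (by linarith) _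
  have ht2a : t ≤ 2 * a := by rw [htdef]; nlinarith
  have hta : 2 * a ^ 2 ≤ t - a := by
    have : a * (2 * a) ≤ a * (2 * a) ^ α := mul_le_mul_of_nonneg_left h2a2 ha0
    rw [htdef]; nlinarith
  have hbtle : b - t ≤ v := by nlinarith
  have hbtge : 2 * v ^ 2 ≤ b - t := by
    have : v * (2 * v) ≤ v * (2 * v) ^ α := mul_le_mul_of_nonneg_left h2v2 hv0.le
    nlinarith
  have ht0 : 0 ≤ t := by rw [htdef]; nlinarith
  have ht1 : t < 1 := by linarith
  constructor
  · -- b - a ≥ 2v² + 2a² ≥ (1-t)²/2 + t²/2 ≥ 1/4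
    have h1 : 1 - t ≤ 2 * v := by linarith
    have h4v : (1 - t) ^ 2 ≤ (2 * v) ^ 2 := pow_le_pow_left₀ (by linarith) h1 2
    have h4a : t ^ 2 ≤ (2 * a) ^ 2 := pow_le_pow_left₀ ht0 ht2a 2
    have hhalf : 1/2 ≤ (1 - t) ^ 2 + t ^ 2 := half_le_sq_add_sq t
    nlinarith
  · -- b - a ≤ 1/2 since a ≥ t/2 and t ≥ 2b - 1
    linarith

theorem gmap_injOn (α : ℝ) (hα0 : 0 < α) (hα1 : α < 1) :
    Set.InjOn (gmap α)
      {p : ℝ × ℝ × ℝ | p.1 ∈ Ico (0:ℝ) 1 ∧ p.2.1 ^ 2 + p.2.2 ^ 2 ≤ 1} := by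
  rintro ⟨x, y, z⟩ ⟨⟨hx0, hx1⟩, hyz⟩ ⟨x', y', z'⟩ ⟨⟨hx0', hx1'⟩, hyz'⟩ heq
  simp only [gmap, Prod.mk.injEq] at heq
  obtain ⟨hT, hc, hs⟩ := heq
  have hπ := Real.pi_pos
  suffices hxx : x = x' by
    subst hxx
    have hy : y = y' := by linarith
    have hz : z = z' := by linarith
    rw [hy, hz]
  -- The fiber coordinates force cos(2πx - 2πx') > 0.
  have hcos : 0 < Real.cos (2 * π * x - 2 * π * x') := by
    have e1 : (Real.cos (2*π*x) - Real.cos (2*π*x')) ^ 2 = ((y' - y)/5) ^ 2 := by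
      have : Real.cos (2*π*x) - Real.cos (2*π*x') = (y' - y)/5 := by linarith
      rw [this]
    have e2 : (Real.sin (2*π*x) - Real.sin (2*π*x')) ^ 2 = ((z' - z)/5) ^ 2 := by
      have : Real.sin (2*π*x) - Real.sin (2*π*x') = (z' - z)/5 := by linarith
      rw [this]
    have p1 := Real.sin_sq_add_cos_sq (2*π*x)
    have p2 := Real.sin_sq_add_cos_sq (2*π*x')
    rw [Real.cos_sub]
    nlinarith [sq_nonneg (y + y'), sq_nonneg (z + z')]
  -- Now show x = x' using the base map equation.
  by_contra hne
  rcases lt_or_ge x (1/2) with h1 | h1 <;> rcases lt_or_ge x' (1/2) with h2 | h2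
  · -- both in the first branch: strict monotonicity
    rw [Tmap, Tmap, if_pos h1, if_pos h2] at hT
    rcases lt_trichotomy x x' with h | h | h
    · exact absurd hT (ne_of_lt (branch1_mono hα0 hx0 h))
    · exact hne h
    · exact absurd hT.symm (ne_of_lt (branch1_mono hα0 hx0' h))
  · -- x < 1/2 ≤ x' : mixed case
    rw [Tmap, Tmap, if_pos h1, if_neg (not_lt.mpr h2)] at hT
    obtain ⟨hg1, hg2⟩ := mixed_gap hα0 hα1 hx0 h1 h2 hx1' hT
    have : Real.cos (2 * π * x - 2 * π * x') ≤ 0 := by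
      have heq2 : 2 * π * x - 2 * π * x' = -(2 * π * (x' - x)) := by ring
      rw [heq2, Real.cos_neg]
      apply Real.cos_nonpos_of_pi_div_two_le_of_le
      · nlinarith
      · nlinarith
    linarith
  · -- x' < 1/2 ≤ x : mixed case (symmetric)
    rw [Tmap, Tmap, if_neg (not_lt.mpr h1), if_pos h2] at hT
    obtain ⟨hg1, hg2⟩ := mixed_gap hα0 hα1 hx0' h2 h1 hx1 hT.symm
    have : Real.cos (2 * π * x - 2 * π * x') ≤ 0 := by
      apply Real.cos_nonpos_of_pi_div_two_le_of_le
      · nlinarith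
      · nlinarith
    linarith
  · -- both in the second branch
    rw [Tmap, Tmap, if_neg (not_lt.mpr h1), if_neg (not_lt.mpr h2)] at hT
    rcases lt_trichotomy x x' with h | h | h
    · exact absurd hT (ne_of_lt (branch2_mono hα0 h hx1'.le))
    · exact hne h
    · exact absurd hT.symm (ne_of_lt (branch2_mono hα0 h hx1.le))
end

section
/- Let α ∈ (0,1). If x ∈ [0,1/2) and x' ∈ [1/2,1) satisfy T_α(x) = T_α(x') (as real numbers in [0,1)), then the Euclidean distance between the points (cos 2πx, sin 2πx) and (cos 2πx', sin 2πx') on the unit circle is greater than 2/5, i.e. (cos 2πx − cos 2πx')² + (sin 2πx − sin 2πx')² > 4/25. -/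
/-!
Each branch of `T_α` is the identity plus a correction `u (2u)^α`, where `u` is the distance to
the nearer endpoint of `[0,1)`. Hence two preimages `x < 1/2 ≤ x'` of one point lie at distance
`t = x' - x = x (2x)^α + (1 - x') (2(1 - x'))^α`. For `0 ≤ u ≤ 1/2` the correction lies between
`2u²` and `u`, so `t ≤ x + (1 - x') = 1 - t` and `t ≥ max (1/2 - x) (2x²) ≥ 1/6`. The chord
between the angles `2πx` and `2πx'` then has squared length `4 sin² (πt) ≥ 1`.
-/

open Set Real

theorem cos_sub_cos_sq_add_sin_sub_sin_sq (a b : ℝ) :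
    (cos a - cos b) ^ 2 + (sin a - sin b) ^ 2 = 4 * sin ((a - b) / 2) ^ 2 := by
  obtain ⟨s, d, rfl, rfl⟩ : ∃ s d, a = s + d ∧ b = s - d :=
    ⟨(a + b) / 2, (a - b) / 2, by ring, by ring⟩
  rw [show (s + d - (s - d)) / 2 = d by ring, cos_add, cos_sub, sin_add, sin_sub]
  linear_combination (4 * sin d ^ 2) * sin_sq_add_cos_sq s

theorem half_le_sin_pi_mul {t : ℝ} (ht : t ∈ Icc (1/6 : ℝ) (5/6)) : 1 / 2 ≤ sin (π * t) := by
  obtain ⟨ht₁, ht₂⟩ := ht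
  wlog ht₃ : t ≤ 1 / 2 generalizing t
  · rw [← sin_pi_sub, ← mul_one_sub π t]
    exact this (by linarith) (by linarith) (by linarith)
  rw [← sin_pi_div_six]
  apply sin_le_sin_of_le_of_le_pi_div_two <;> nlinarith [pi_pos]

theorem sub_eq_of_Tmap_eq {α x x' : ℝ} (hα : 0 ≤ α) (hx : x < 1/2) (hx' : x' ∈ Ico (1/2 : ℝ) 1)
    (hT : Tmap α x = Tmap α x') :
    x' - x = x * (2 * x) ^ α + (1 - x') * (2 * (1 - x')) ^ α := by
  have h1x' : 0 ≤ 1 - x' := by linarith [hx'.2]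
  rw [Tmap, Tmap, if_pos hx, if_neg (not_lt.2 hx'.1), rpow_add' h1x' (by linarith), rpow_one] at hT
  rw [mul_rpow zero_le_two h1x']
  linear_combination -hT

theorem mul_two_mul_rpow_mem_Icc {α u : ℝ} (hα₀ : 0 ≤ α) (hα₁ : α ≤ 1)
    (hu : u ∈ Icc (0 : ℝ) (1/2)) : u * (2 * u) ^ α ∈ Icc (2 * u ^ 2) u := by
  obtain ⟨hu₀, hu₁⟩ := hu
  have hlow : 2 * u ≤ (2 * u) ^ α := self_le_rpow_of_le_one (by linarith) (by linarith) hα₁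
  have hup : (2 * u) ^ α ≤ 1 := rpow_le_one (by linarith) (by linarith) hα₀
  constructor <;> nlinarith

theorem sub_mem_Icc_of_Tmap_eq {α x x' : ℝ} (hα₀ : 0 ≤ α) (hα₁ : α ≤ 1)
    (hx : x ∈ Ico (0 : ℝ) (1/2)) (hx' : x' ∈ Ico (1/2 : ℝ) 1) (hT : Tmap α x = Tmap α x') :
    x' - x ∈ Icc (1/6 : ℝ) (1/2) := by
  have hgap := sub_eq_of_Tmap_eq hα₀ hx.2 hx' hT
  obtain ⟨hx_low, hx_up⟩ := mul_two_mul_rpow_mem_Icc hα₀ hα₁ ⟨hx.1, hx.2.le⟩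
  obtain ⟨-, hx'_up⟩ := mul_two_mul_rpow_mem_Icc (u := 1 - x') hα₀ hα₁
    ⟨by linarith [hx'.2], by linarith [hx'.1]⟩
  have hx'_nonneg : 0 ≤ (1 - x') * (2 * (1 - x')) ^ α :=
    mul_nonneg (by linarith [hx'.2]) (rpow_nonneg (by linarith [hx'.2]) α)
  constructor
  · rcases le_or_gt x (1/3) with h | h <;> nlinarith [hx'.1]
  · linarith

theorem branch_preimages_separated (α : ℝ) (hα0 : 0 < α) (hα1 : α < 1)
    (x x' : ℝ) (hx : x ∈ Ico (0:ℝ) (1/2)) (hx' : x' ∈ Ico (1/2 : ℝ) 1)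
    (hT : Tmap α x = Tmap α x') :
    (Real.cos (2 * π * x) - Real.cos (2 * π * x')) ^ 2 +
      (Real.sin (2 * π * x) - Real.sin (2 * π * x')) ^ 2 > 4 / 25 := by
  obtain ⟨hgap₁, hgap₂⟩ := sub_mem_Icc_of_Tmap_eq hα0.le hα1.le hx hx' hT
  have hsin := half_le_sin_pi_mul (t := x' - x) ⟨hgap₁, by linarith⟩
  have hangle : (2 * π * x - 2 * π * x') / 2 = -(π * (x' - x)) := by ring
  rw [cos_sub_cos_sq_add_sin_sub_sin_sq, hangle, sin_neg, neg_sq]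
  nlinarith
end

section
/- Let s, c, t ∈ ℝ with s² + c² ≤ 1 and t ≥ 1, and let A be the 3×3 real matrix with rows (t, 0, 0), (−s/2, 1/10, 0), (c/2, 0, 1/10). Then for every v = (v₁, v₂, v₃) ∈ ℝ³ with √(v₂² + v₃²) ≤ 2|v₁|, the image v̄ = Av satisfies √(v̄₂² + v̄₃²) ≤ (7/10)|v₁| ≤ (7/10)|v̄₁|; in particular Av again belongs to the centre-unstable cone 𝒞 = {(w₁,w₂,w₃) ∈ ℝ³ : 2|w₁| ≥ √(w₂² + w₃²)}. -/
open Matrix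

lemma mink_aux (a b c d : ℝ) :
    Real.sqrt ((a + b) ^ 2 + (c + d) ^ 2) ≤
      Real.sqrt (a ^ 2 + c ^ 2) + Real.sqrt (b ^ 2 + d ^ 2) := by
  have h1 : (0:ℝ) ≤ a ^ 2 + c ^ 2 := by positivity
  have h2 : (0:ℝ) ≤ b ^ 2 + d ^ 2 := by positivity
  have s1 := Real.sq_sqrt h1
  have s2 := Real.sq_sqrt h2
  have n1 := Real.sqrt_nonneg (a ^ 2 + c ^ 2)
  have n2 := Real.sqrt_nonneg (b ^ 2 + d ^ 2)
  have cs : a * b + c * d ≤ Real.sqrt (a ^ 2 + c ^ 2) * Real.sqrt (b ^ 2 + d ^ 2) := by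
    have hprod : Real.sqrt (a ^ 2 + c ^ 2) * Real.sqrt (b ^ 2 + d ^ 2)
        = Real.sqrt ((a ^ 2 + c ^ 2) * (b ^ 2 + d ^ 2)) := (Real.sqrt_mul h1 _).symm
    have hcs2 : (a * b + c * d) ^ 2 ≤ (a ^ 2 + c ^ 2) * (b ^ 2 + d ^ 2) := by
      nlinarith [sq_nonneg (a * d - b * c)]
    calc a * b + c * d ≤ |a * b + c * d| := le_abs_self _
      _ = Real.sqrt ((a * b + c * d) ^ 2) := (Real.sqrt_sq_eq_abs _).symm
      _ ≤ Real.sqrt ((a ^ 2 + c ^ 2) * (b ^ 2 + d ^ 2)) := Real.sqrt_le_sqrt hcs2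
      _ = _ := hprod.symm
  have key : (a + b) ^ 2 + (c + d) ^ 2 ≤
      (Real.sqrt (a ^ 2 + c ^ 2) + Real.sqrt (b ^ 2 + d ^ 2)) ^ 2 := by nlinarith
  calc Real.sqrt ((a + b) ^ 2 + (c + d) ^ 2)
      ≤ Real.sqrt ((Real.sqrt (a ^ 2 + c ^ 2) + Real.sqrt (b ^ 2 + d ^ 2)) ^ 2) :=
        Real.sqrt_le_sqrt key
    _ = _ := Real.sqrt_sq (by positivity)

theorem cone_invariance (s c t : ℝ) (hsc : s ^ 2 + c ^ 2 ≤ 1) (ht : 1 ≤ t)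
    (v : Fin 3 → ℝ)
    (hv : Real.sqrt ((v 1) ^ 2 + (v 2) ^ 2) ≤ 2 * |v 0|) :
    Real.sqrt (((!![t, 0, 0; -s/2, 1/10, 0; c/2, 0, 1/10].mulVec v) 1) ^ 2 +
        ((!![t, 0, 0; -s/2, 1/10, 0; c/2, 0, 1/10].mulVec v) 2) ^ 2)
      ≤ (7/10) * |v 0| ∧
    (7/10) * |v 0| ≤ (7/10) * |(!![t, 0, 0; -s/2, 1/10, 0; c/2, 0, 1/10].mulVec v) 0| ∧
    Real.sqrt (((!![t, 0, 0; -s/2, 1/10, 0; c/2, 0, 1/10].mulVec v) 1) ^ 2 +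
        ((!![t, 0, 0; -s/2, 1/10, 0; c/2, 0, 1/10].mulVec v) 2) ^ 2)
      ≤ 2 * |(!![t, 0, 0; -s/2, 1/10, 0; c/2, 0, 1/10].mulVec v) 0| := by
  have e0 : (!![t, 0, 0; -s/2, 1/10, 0; c/2, 0, 1/10].mulVec v) 0 = t * v 0 := by
    simp [mulVec, dotProduct, Fin.sum_univ_three]
  have e1 : (!![t, 0, 0; -s/2, 1/10, 0; c/2, 0, 1/10].mulVec v) 1
      = -s/2 * v 0 + v 1 / 10 := by
    simp [mulVec, dotProduct, Fin.sum_univ_three]; ring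
  have e2 : (!![t, 0, 0; -s/2, 1/10, 0; c/2, 0, 1/10].mulVec v) 2
      = c/2 * v 0 + v 2 / 10 := by
    simp [mulVec, dotProduct, Fin.sum_univ_three]; ring
  rw [e0, e1, e2]
  -- bound the two pieces
  have hA : Real.sqrt ((-s/2 * v 0) ^ 2 + (c/2 * v 0) ^ 2) ≤ |v 0| / 2 := by
    have : (-s/2 * v 0) ^ 2 + (c/2 * v 0) ^ 2 ≤ (|v 0| / 2) ^ 2 := by
      have := sq_abs (v 0)
      nlinarith [sq_nonneg (v 0)]
    calc Real.sqrt ((-s/2 * v 0) ^ 2 + (c/2 * v 0) ^ 2)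
        ≤ Real.sqrt ((|v 0| / 2) ^ 2) := Real.sqrt_le_sqrt this
      _ = |v 0| / 2 := Real.sqrt_sq (by positivity)
  have hB : Real.sqrt ((v 1 / 10) ^ 2 + (v 2 / 10) ^ 2) ≤ |v 0| / 5 := by
    have hx : (v 1) ^ 2 + (v 2) ^ 2 ≤ (2 * |v 0|) ^ 2 := by
      nlinarith [Real.sq_sqrt (show (0:ℝ) ≤ (v 1)^2 + (v 2)^2 by positivity),
        Real.sqrt_nonneg ((v 1)^2 + (v 2)^2), abs_nonneg (v 0)]
    have : (v 1 / 10) ^ 2 + (v 2 / 10) ^ 2 ≤ (|v 0| / 5) ^ 2 := by nlinarith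
    calc Real.sqrt ((v 1 / 10) ^ 2 + (v 2 / 10) ^ 2)
        ≤ Real.sqrt ((|v 0| / 5) ^ 2) := Real.sqrt_le_sqrt this
      _ = |v 0| / 5 := Real.sqrt_sq (by positivity)
  have hmain : Real.sqrt ((-s/2 * v 0 + v 1 / 10) ^ 2 + (c/2 * v 0 + v 2 / 10) ^ 2)
      ≤ (7/10) * |v 0| := by
    calc Real.sqrt ((-s/2 * v 0 + v 1 / 10) ^ 2 + (c/2 * v 0 + v 2 / 10) ^ 2)
        ≤ Real.sqrt ((-s/2 * v 0) ^ 2 + (c/2 * v 0) ^ 2) +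
          Real.sqrt ((v 1 / 10) ^ 2 + (v 2 / 10) ^ 2) := mink_aux _ _ _ _
      _ ≤ |v 0| / 2 + |v 0| / 5 := add_le_add hA hB
      _ = (7/10) * |v 0| := by ring
  have h0 : |v 0| ≤ |t * v 0| := by
    rw [abs_mul]
    nlinarith [abs_nonneg (v 0), abs_of_nonneg (le_trans zero_le_one ht)]
  refine ⟨hmain, by linarith, ?_⟩
  calc Real.sqrt ((-s/2 * v 0 + v 1 / 10) ^ 2 + (c/2 * v 0 + v 2 / 10) ^ 2)
      ≤ (7/10) * |v 0| := hmain
    _ ≤ 2 * |t * v 0| := by nlinarith [abs_nonneg (v 0)]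
end

section
/- Let n ≥ 1 and for 0 ≤ j ≤ n−1 let A_j be the 3×3 real matrix with rows (t_j, 0, 0), (−s_j/2, 1/10, 0), (c_j/2, 0, 1/10), where s_j² + c_j² ≤ 1 and t_j ≥ 1. Let v, w ∈ ℝ³ lie in the cone 𝒞 = {(u₁,u₂,u₃) : 2|u₁| ≥ √(u₂² + u₃²)} with v₁ ≠ 0 and w₁ ≠ 0, and set B_n = A_{n−1}⋯A_1A_0. Then (B_n v)₁ ≠ 0, (B_n w)₁ ≠ 0, and for i = 2, 3 one has |(B_n v)_i/(B_n v)₁ − (B_n w)_i/(B_n w)₁| = (10^n · t₀t₁⋯t_{n−1})^{−1} · |v_i/v₁ − w_i/w₁| ≤ 4·10^{−n}. -/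
open Matrix

/-
The matrix `!![a, 0, 0; b, l, 0; g, 0, l]` acts on the slopes `σ = u i / u 0` of a vector by
the affine maps `σ ↦ b / a + (l / a) σ` and `σ ↦ g / a + (l / a) σ`, so differences of slopes
are multiplied by `l / a` at each step, hence by `∏ (1/10) / t j = (10 ^ n * ∏ t j)⁻¹` along the
product. Cone vectors have slopes in `[-2, 2]`, so the initial difference is at most `4`.
-/

/-- `matProd A n = A (n-1) * ⋯ * A 1 * A 0`, with `matProd A 0 = 1`. -/
def matProd (A : ℕ → Matrix (Fin 3) (Fin 3) ℝ) : ℕ → Matrix (Fin 3) (Fin 3) ℝ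
  | 0 => 1
  | n + 1 => A n * matProd A n

lemma matProd_succ_mulVec (A : ℕ → Matrix (Fin 3) (Fin 3) ℝ) (n : ℕ) (u : Fin 3 → ℝ) :
    matProd A (n + 1) *ᵥ u = A n *ᵥ (matProd A n *ᵥ u) := by
  simp [matProd, Matrix.mulVec_mulVec]

noncomputable def coordSlope (u : Fin 3 → ℝ) (i : Fin 3) : ℝ := u i / u 0

lemma mulVec_lowerBlock (a b g l : ℝ) (u : Fin 3 → ℝ) :
    !![a, 0, 0; b, l, 0; g, 0, l] *ᵥ u = ![a * u 0, b * u 0 + l * u 1, g * u 0 + l * u 2] := by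
  ext i
  fin_cases i <;> simp [Matrix.mulVec, dotProduct, Fin.sum_univ_three]

lemma coordSlope_sub_lowerBlock_mulVec {a b g l : ℝ} (ha : a ≠ 0) {u u' : Fin 3 → ℝ}
    (hu : u 0 ≠ 0) (hu' : u' 0 ≠ 0) (i : Fin 3) :
    coordSlope (!![a, 0, 0; b, l, 0; g, 0, l] *ᵥ u) i
        - coordSlope (!![a, 0, 0; b, l, 0; g, 0, l] *ᵥ u') i
      = l / a * (coordSlope u i - coordSlope u' i) := by
  simp only [coordSlope, mulVec_lowerBlock]
  fin_cases i <;> simp <;> field_simp <;> ring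

section LowerBlockProduct

variable {A : ℕ → Matrix (Fin 3) (Fin 3) ℝ} {a b g l : ℕ → ℝ} {n : ℕ}

lemma matProd_mulVec_zero (hA : ∀ j < n, A j = !![a j, 0, 0; b j, l j, 0; g j, 0, l j])
    (u : Fin 3 → ℝ) : (matProd A n *ᵥ u) 0 = (∏ j ∈ Finset.range n, a j) * u 0 := by
  induction n with
  | zero => simp [matProd]
  | succ n ih =>
    rw [matProd_succ_mulVec, hA n n.lt_succ_self, mulVec_lowerBlock, Matrix.cons_val_zero,
      ih fun j hj => hA j (hj.trans n.lt_succ_self), Finset.prod_range_succ]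
    ring

lemma matProd_mulVec_zero_ne_zero (hA : ∀ j < n, A j = !![a j, 0, 0; b j, l j, 0; g j, 0, l j])
    (ha : ∀ j < n, a j ≠ 0) {u : Fin 3 → ℝ} (hu : u 0 ≠ 0) :
    (matProd A n *ᵥ u) 0 ≠ 0 := by
  rw [matProd_mulVec_zero hA]
  exact mul_ne_zero (Finset.prod_ne_zero_iff.mpr fun j hj => ha j (Finset.mem_range.mp hj)) hu

lemma coordSlope_sub_matProd_mulVec (hA : ∀ j < n, A j = !![a j, 0, 0; b j, l j, 0; g j, 0, l j])
    (ha : ∀ j < n, a j ≠ 0) {u u' : Fin 3 → ℝ} (hu : u 0 ≠ 0) (hu' : u' 0 ≠ 0)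
    (i : Fin 3) :
    coordSlope (matProd A n *ᵥ u) i - coordSlope (matProd A n *ᵥ u') i
      = (∏ j ∈ Finset.range n, l j / a j) * (coordSlope u i - coordSlope u' i) := by
  induction n with
  | zero => simp [matProd]
  | succ n ih =>
    have hA' : ∀ j < n, A j = !![a j, 0, 0; b j, l j, 0; g j, 0, l j] :=
      fun j hj => hA j (hj.trans n.lt_succ_self)
    have ha' : ∀ j < n, a j ≠ 0 := fun j hj => ha j (hj.trans n.lt_succ_self)
    rw [matProd_succ_mulVec, matProd_succ_mulVec, hA n n.lt_succ_self,
      coordSlope_sub_lowerBlock_mulVec (ha n n.lt_succ_self)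
        (matProd_mulVec_zero_ne_zero hA' ha' hu) (matProd_mulVec_zero_ne_zero hA' ha' hu'),
      ih hA' ha', Finset.prod_range_succ]
    ring

end LowerBlockProduct

lemma abs_coordSlope_le_two {u : Fin 3 → ℝ}
    (hu : Real.sqrt ((u 1) ^ 2 + (u 2) ^ 2) ≤ 2 * |u 0|)
    (hu0 : u 0 ≠ 0) {i : Fin 3} (hi : i ≠ 0) : |coordSlope u i| ≤ 2 := by
  have hui : |u i| ≤ Real.sqrt ((u 1) ^ 2 + (u 2) ^ 2) := by
    apply Real.abs_le_sqrt
    fin_cases i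
    · exact absurd rfl hi
    · simp [sq_nonneg]
    · simp [sq_nonneg]
  rw [coordSlope, abs_div, div_le_iff₀ (abs_pos.mpr hu0)]
  linarith

theorem cone_slopes_converge_general (n : ℕ)
    (A : ℕ → Matrix (Fin 3) (Fin 3) ℝ) (t s c : ℕ → ℝ)
    (hA : ∀ j < n, A j = !![t j, 0, 0; -(s j)/2, 1/10, 0; (c j)/2, 0, 1/10])
    (ht : ∀ j < n, 1 ≤ t j)
    (v w : Fin 3 → ℝ)
    (hv : Real.sqrt ((v 1) ^ 2 + (v 2) ^ 2) ≤ 2 * |v 0|)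
    (hw : Real.sqrt ((w 1) ^ 2 + (w 2) ^ 2) ≤ 2 * |w 0|)
    (hv0 : v 0 ≠ 0) (hw0 : w 0 ≠ 0) :
    ((matProd A n).mulVec v) 0 ≠ 0 ∧
    ((matProd A n).mulVec w) 0 ≠ 0 ∧
    ∀ i : Fin 3, i ≠ 0 →
      |((matProd A n).mulVec v) i / ((matProd A n).mulVec v) 0 -
        ((matProd A n).mulVec w) i / ((matProd A n).mulVec w) 0|
        = (10 ^ n * ∏ j ∈ Finset.range n, t j)⁻¹ * |v i / v 0 - w i / w 0| ∧
      |((matProd A n).mulVec v) i / ((matProd A n).mulVec v) 0 -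
        ((matProd A n).mulVec w) i / ((matProd A n).mulVec w) 0|
        ≤ 4 / 10 ^ n := by
  have ht0 : ∀ j < n, t j ≠ 0 := fun j hj => (zero_lt_one.trans_le (ht j hj)).ne'
  have hprod : 1 ≤ ∏ j ∈ Finset.range n, t j :=
    Finset.one_le_prod fun j hj => ht j (Finset.mem_range.mp hj)
  have hfactor : ∏ j ∈ Finset.range n, (1 / 10 : ℝ) / t j
      = (10 ^ n * ∏ j ∈ Finset.range n, t j)⁻¹ := by
    simp only [Finset.prod_div_distrib, Finset.prod_const, Finset.card_range, one_pow]
    ring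
  have hcontract : ∀ i, |coordSlope (matProd A n *ᵥ v) i - coordSlope (matProd A n *ᵥ w) i|
      = (10 ^ n * ∏ j ∈ Finset.range n, t j)⁻¹ * |coordSlope v i - coordSlope w i| := by
    intro i
    rw [coordSlope_sub_matProd_mulVec hA ht0 hv0 hw0, hfactor, abs_mul,
      abs_of_pos (by positivity)]
  refine ⟨matProd_mulVec_zero_ne_zero hA ht0 hv0, matProd_mulVec_zero_ne_zero hA ht0 hw0,
    fun i hi => ⟨hcontract i, ?_⟩⟩
  have hslopes : |coordSlope v i - coordSlope w i| ≤ 4 := by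
    linarith [abs_sub (coordSlope v i) (coordSlope w i), abs_coordSlope_le_two hv hv0 hi,
      abs_coordSlope_le_two hw hw0 hi]
  calc _ = (10 ^ n * ∏ j ∈ Finset.range n, t j)⁻¹ * |coordSlope v i - coordSlope w i| :=
        hcontract i
    _ ≤ ((10 : ℝ) ^ n)⁻¹ * 4 := by
      gcongr
      exact le_mul_of_one_le_right (by positivity) hprod
    _ = 4 / 10 ^ n := by ring

theorem cone_slopes_converge (n : ℕ) (hn : 1 ≤ n)
    (A : ℕ → Matrix (Fin 3) (Fin 3) ℝ) (t s c : ℕ → ℝ)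
    (hA : ∀ j < n, A j = !![t j, 0, 0; -(s j)/2, 1/10, 0; (c j)/2, 0, 1/10])
    (hsc : ∀ j < n, (s j) ^ 2 + (c j) ^ 2 ≤ 1)
    (ht : ∀ j < n, 1 ≤ t j)
    (v w : Fin 3 → ℝ)
    (hv : Real.sqrt ((v 1) ^ 2 + (v 2) ^ 2) ≤ 2 * |v 0|)
    (hw : Real.sqrt ((w 1) ^ 2 + (w 2) ^ 2) ≤ 2 * |w 0|)
    (hv0 : v 0 ≠ 0) (hw0 : w 0 ≠ 0) :
    ((matProd A n).mulVec v) 0 ≠ 0 ∧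
    ((matProd A n).mulVec w) 0 ≠ 0 ∧
    ∀ i : Fin 3, i ≠ 0 →
      |((matProd A n).mulVec v) i / ((matProd A n).mulVec v) 0 -
        ((matProd A n).mulVec w) i / ((matProd A n).mulVec w) 0|
        = (10 ^ n * ∏ j ∈ Finset.range n, t j)⁻¹ * |v i / v 0 - w i / w 0| ∧
      |((matProd A n).mulVec v) i / ((matProd A n).mulVec v) 0 -
        ((matProd A n).mulVec w) i / ((matProd A n).mulVec w) 0|
        ≤ 4 / 10 ^ n :=
  cone_slopes_converge_general n A t s c hA ht v w hv hw hv0 hw0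
end

section
/- Let 0 < α₁ < 1 and let (α_j)_{j≥0} be any sequence with α_j ∈ (0, α₁] for all j. Define x₁ = 1/2 and x_n = h_{α₀} ∘ h_{α₁} ∘ ⋯ ∘ h_{α_{n−2}}(1/2) for n ≥ 2, where h_α : [0,1] → [0,1/2] is the inverse of the left branch x ↦ x(1+(2x)^α) of T_α. Then the sequence (x_n)_{n≥1} is strictly decreasing and converges to 0, and there exists a constant C > 0 depending only on α₁ such that x_n ≤ C·n^{−1/α₁} for all n ≥ 1. -/
open Set Filter

/-- The random backward orbit of `1/2` under the inverses `h` of the left branches: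
`xseq h α 0 = 1/2 = x₁` and `xseq h α n = h_{α₀} ∘ h_{α₁} ∘ ⋯ ∘ h_{α_{n−1}} (1/2) = x_{n+1}`. -/
noncomputable def xseq (h : ℝ → ℝ → ℝ) : (ℕ → ℝ) → ℕ → ℝ
  | _, 0 => 1/2
  | α, n + 1 => h (α 0) (xseq h (fun j => α (j + 1)) n)

/-!
The orbit decreases because each `h_a` is increasing with `h_a y < y`. For the rate, the
potential `x ↦ x ^ (-α₁)` gains at least `c = 1 - 2 ^ (-α₁)` at every backward step: if
`y = x (1 + (2x) ^ a)` with `a ≤ α₁` and `x ≤ 1/2`, then `y ≥ x (1 + t)` with `t = x ^ α₁ ≤ 1`,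
and `(1 + t) ^ (-α₁) ≤ 1 - c t` on `[0, 1]`, so `y ^ (-α₁) ≤ x ^ (-α₁) - c`. Hence
`x_{n+1} ^ (-α₁) ≥ c (n + 1)`, that is `x_{n+1} ≤ c ^ (-1/α₁) (n + 1) ^ (-1/α₁)`.
-/

lemma one_sub_two_rpow_neg_pos {α : ℝ} (hα : 0 < α) : 0 < 1 - (2 : ℝ) ^ (-α) :=
  sub_pos.2 (Real.rpow_lt_one_of_one_lt_of_neg one_lt_two (neg_lt_zero.2 hα))

lemma one_add_rpow_neg_le {α t : ℝ} (hα : 0 ≤ α) (ht₀ : 0 ≤ t) (ht₁ : t ≤ 1) :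
    (1 + t) ^ (-α) ≤ 1 - (1 - 2 ^ (-α)) * t := by
  have two_rpow_le : (2 : ℝ) ^ t ≤ 1 + t := by
    simpa [one_add_one_eq_two] using
      rpow_one_add_le_one_add_mul_self (s := 1) (by norm_num) ht₀ ht₁
  have chord := (convexOn_rpow_left (b := (2 : ℝ) ^ (-α)) (by positivity)).2 (mem_univ 0)
    (mem_univ 1) (sub_nonneg.2 ht₁) ht₀ (sub_add_cancel 1 t)
  simp only [smul_eq_mul, mul_zero, mul_one, zero_add, Real.rpow_zero, Real.rpow_one] at chord
  calc (1 + t) ^ (-α) ≤ ((2 : ℝ) ^ t) ^ (-α) :=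
        Real.rpow_le_rpow_of_nonpos (by positivity) two_rpow_le (neg_nonpos.2 hα)
    _ = ((2 : ℝ) ^ (-α)) ^ t := by rw [← Real.rpow_mul, ← Real.rpow_mul, mul_comm] <;> norm_num
    _ ≤ 1 - (1 - 2 ^ (-α)) * t := by linarith

/-- The left branch of the intermittent map `T_a`. -/
noncomputable def leftBranch (a x : ℝ) : ℝ := x * (1 + (2 * x) ^ a)

lemma self_lt_leftBranch (a : ℝ) {x : ℝ} (hx : 0 < x) : x < leftBranch a x := by
  have : 0 < (2 * x) ^ a := by positivity
  unfold leftBranch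
  nlinarith

lemma monotoneOn_leftBranch {a : ℝ} (ha : 0 ≤ a) : MonotoneOn (leftBranch a) (Ici 0) := by
  intro x (hx : 0 ≤ x) y (hy : 0 ≤ y) hxy
  unfold leftBranch
  gcongr

lemma rpow_neg_leftBranch_add_le {α₁ a x : ℝ} (h0 : 0 < α₁) (ha : a ∈ Ioc 0 α₁)
    (hx : x ∈ Ioc 0 (1 / 2)) :
    leftBranch a x ^ (-α₁) + (1 - 2 ^ (-α₁)) ≤ x ^ (-α₁) := by
  obtain ⟨hx₀, hx₁⟩ := hx
  set t := x ^ α₁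
  have t_le : t ≤ (2 * x) ^ a := calc
    t ≤ (2 * x) ^ α₁ := Real.rpow_le_rpow hx₀.le (by linarith) h0.le
    _ ≤ (2 * x) ^ a := Real.rpow_le_rpow_of_exponent_ge (by positivity) (by linarith) ha.2
  have t_le_one : t ≤ 1 := Real.rpow_le_one hx₀.le (by linarith) h0.le
  have rpow_neg_mul_t : x ^ (-α₁) * t = 1 := by
    rw [Real.rpow_neg hx₀.le, inv_mul_cancel₀ (by positivity)]
  have branch_ge : x * (1 + t) ≤ leftBranch a x := by
    unfold leftBranch
    gcongr
  calc leftBranch a x ^ (-α₁) + (1 - 2 ^ (-α₁))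
      ≤ (x * (1 + t)) ^ (-α₁) + (1 - 2 ^ (-α₁)) := by
        gcongr ?_ + _
        exact Real.rpow_le_rpow_of_nonpos (by positivity) branch_ge (by linarith)
    _ = x ^ (-α₁) * (1 + t) ^ (-α₁) + (1 - 2 ^ (-α₁)) := by
        rw [Real.mul_rpow hx₀.le (by positivity)]
    _ ≤ x ^ (-α₁) * (1 - (1 - 2 ^ (-α₁)) * t) + (1 - 2 ^ (-α₁)) := by
        gcongr
        exact one_add_rpow_neg_le h0.le (by positivity) t_le_one
    _ = x ^ (-α₁) := by linear_combination -(1 - 2 ^ (-α₁)) * rpow_neg_mul_t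

def IsLeftBranchInverse (α₁ : ℝ) (h : ℝ → ℝ → ℝ) : Prop :=
  ∀ a ∈ Ioc (0:ℝ) α₁, ∀ y ∈ Icc (0:ℝ) 1, h a y ∈ Icc (0:ℝ) (1/2) ∧ leftBranch a (h a y) = y

namespace IsLeftBranchInverse

variable {α₁ a y : ℝ} {h : ℝ → ℝ → ℝ} {α : ℕ → ℝ}

lemma mem_Ioc (H : IsLeftBranchInverse α₁ h) (ha : a ∈ Ioc 0 α₁) (hy : y ∈ Ioc 0 1) :
    h a y ∈ Ioc 0 (1 / 2) := by
  obtain ⟨⟨hx₀, hx₁⟩, hxy⟩ := H a ha y (Ioc_subset_Icc_self hy)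
  refine ⟨hx₀.lt_of_ne ?_, hx₁⟩
  rintro hx
  simp [← hx, leftBranch, hy.1.ne] at hxy

lemma lt_self (H : IsLeftBranchInverse α₁ h) (ha : a ∈ Ioc 0 α₁) (hy : y ∈ Ioc 0 1) :
    h a y < y := by
  simpa only [(H a ha y (Ioc_subset_Icc_self hy)).2] using
    self_lt_leftBranch a (H.mem_Ioc ha hy).1

lemma strictMonoOn (H : IsLeftBranchInverse α₁ h) (ha : a ∈ Ioc 0 α₁) :
    StrictMonoOn (h a) (Icc 0 1) := by
  intro y hy y' hy' hyy'
  by_contra! hle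
  obtain ⟨⟨hx₀, -⟩, hx⟩ := H a ha y hy
  obtain ⟨⟨hx₀', -⟩, hx'⟩ := H a ha y' hy'
  have := monotoneOn_leftBranch ha.1.le hx₀' hx₀ hle
  rw [hx, hx'] at this
  exact hyy'.not_ge this

lemma xseq_mem_Ioc (H : IsLeftBranchInverse α₁ h) (hα : ∀ j, α j ∈ Ioc 0 α₁) (n : ℕ) :
    xseq h α n ∈ Ioc 0 (1 / 2) := by
  induction n generalizing α with
  | zero => norm_num [xseq]
  | succ n ih =>
    have hy := ih fun j => hα (j + 1)
    exact H.mem_Ioc (hα 0) ⟨hy.1, hy.2.trans (by norm_num)⟩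

lemma xseq_strictAnti (H : IsLeftBranchInverse α₁ h) (hα : ∀ j, α j ∈ Ioc 0 α₁) :
    StrictAnti (xseq h α) := by
  refine strictAnti_nat_of_succ_lt fun n => ?_
  induction n generalizing α with
  | zero => exact H.lt_self (y := 1 / 2) (hα 0) (by norm_num)
  | succ n ih =>
    have mem_Icc (m : ℕ) : xseq h (fun j => α (j + 1)) m ∈ Icc 0 1 := by
      have hy := H.xseq_mem_Ioc (fun j => hα (j + 1)) m
      exact ⟨hy.1.le, hy.2.trans (by norm_num)⟩
    exact H.strictMonoOn (hα 0) (mem_Icc _) (mem_Icc _) (ih fun j => hα (j + 1))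

lemma xseq_rpow_neg_ge (H : IsLeftBranchInverse α₁ h) (h0 : 0 < α₁)
    (hα : ∀ j, α j ∈ Ioc 0 α₁) (n : ℕ) :
    2 ^ α₁ + (1 - 2 ^ (-α₁)) * n ≤ xseq h α n ^ (-α₁) := by
  induction n generalizing α with
  | zero => simp [xseq, Real.rpow_neg, Real.inv_rpow]
  | succ n ih =>
    have hy := H.xseq_mem_Ioc (fun j => hα (j + 1)) n
    have branch := (H (α 0) (hα 0) _ ⟨hy.1.le, hy.2.trans (by norm_num)⟩).2
    have step := rpow_neg_leftBranch_add_le h0 (hα 0) (H.xseq_mem_Ioc hα (n + 1))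
    rw [xseq] at step ⊢
    rw [branch] at step
    push_cast
    linarith [ih fun j => hα (j + 1)]

lemma xseq_le (H : IsLeftBranchInverse α₁ h) (h0 : 0 < α₁) (hα : ∀ j, α j ∈ Ioc 0 α₁)
    (n : ℕ) : xseq h α n ≤ (1 - 2 ^ (-α₁)) ^ (-(1 / α₁)) * ((n : ℝ) + 1) ^ (-(1 / α₁)) := by
  have potential : (1 - 2 ^ (-α₁)) * ((n : ℝ) + 1) ≤ xseq h α n ^ (-α₁) := by
    linarith [H.xseq_rpow_neg_ge h0 hα n, Real.rpow_nonneg zero_le_two (-α₁),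
      Real.one_le_rpow one_le_two h0.le]
  rw [← Real.mul_rpow (one_sub_two_rpow_neg_pos h0).le (by positivity), one_div, ← inv_neg]
  exact (Real.le_rpow_inv_iff_of_neg (H.xseq_mem_Ioc hα n).1
    (mul_pos (one_sub_two_rpow_neg_pos h0) (by positivity)) (neg_lt_zero.2 h0)).2 potential

end IsLeftBranchInverse

theorem backward_orbit_polynomial_decay_general (α₁ : ℝ) (h0 : 0 < α₁) :
    ∃ C > 0, ∀ (α : ℕ → ℝ), (∀ j, α j ∈ Ioc (0:ℝ) α₁) →
      ∀ (h : ℝ → ℝ → ℝ),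
        (∀ a ∈ Ioc (0:ℝ) α₁, ∀ y ∈ Icc (0:ℝ) 1,
          h a y ∈ Icc (0:ℝ) (1/2) ∧ h a y * (1 + (2 * h a y) ^ a) = y) →
        StrictAnti (fun n => xseq h α n) ∧
        Tendsto (fun n => xseq h α n) atTop (nhds 0) ∧
        ∀ n : ℕ, 1 ≤ n → xseq h α (n - 1) ≤ C * (n : ℝ) ^ (-(1/α₁)) := by
  refine ⟨_, Real.rpow_pos_of_pos (one_sub_two_rpow_neg_pos h0) (-(1 / α₁)),
    fun α hα h H => ?_⟩
  replace H : IsLeftBranchInverse α₁ h := H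
  have decay : Tendsto (fun n : ℕ => ((n : ℝ) + 1) ^ (-(1 / α₁))) atTop (nhds 0) :=
    (tendsto_rpow_neg_atTop (by positivity)).comp
      (tendsto_atTop_add_const_right _ 1 tendsto_natCast_atTop_atTop)
  refine ⟨H.xseq_strictAnti hα, squeeze_zero (fun n => (H.xseq_mem_Ioc hα n).1.le)
    (H.xseq_le h0 hα) (by simpa using decay.const_mul _), ?_⟩
  rintro (_ | n) hn
  · exact absurd hn (by norm_num)
  · simpa using H.xseq_le h0 hα n

theorem backward_orbit_polynomial_decay (α₁ : ℝ) (h0 : 0 < α₁) (h1 : α₁ < 1) :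
    ∃ C > 0, ∀ (α : ℕ → ℝ), (∀ j, α j ∈ Ioc (0:ℝ) α₁) →
      ∀ (h : ℝ → ℝ → ℝ),
        (∀ a ∈ Ioc (0:ℝ) α₁, ∀ y ∈ Icc (0:ℝ) 1,
          h a y ∈ Icc (0:ℝ) (1/2) ∧ h a y * (1 + (2 * h a y) ^ a) = y) →
        StrictAnti (fun n => xseq h α n) ∧
        Tendsto (fun n => xseq h α n) atTop (nhds 0) ∧
        ∀ n : ℕ, 1 ≤ n → xseq h α (n - 1) ≤ C * (n : ℝ) ^ (-(1/α₁)) :=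
  backward_orbit_polynomial_decay_general α₁ h0
end

section
/- Let A > 0 and 0 < c ≤ A, and set θ = c/(2A − c) and α = e^{−c/2}. Let (a_j)_{j≥1} be a sequence of real numbers with |a_j| ≤ A for all j and limsup_{n→∞} (1/n)·Σ_{j=1}^{n} a_j < −c. Then there exists N₀ ∈ ℕ such that for every n ≥ N₀ there are at least θ·n integers m with 1 ≤ m ≤ n having the following property: Σ_{j=m−k+1}^{m} a_j ≤ k·log α (equivalently ≤ −(c/2)·k) for every 1 ≤ k ≤ m. -/
/-!
Writing `excess m = ∑_{j ≤ m} a j - m r` with `r = -c/2`, the time `m` is hyperbolic exactly when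
`excess m` is a running minimum of `excess`. A step lowers `excess` by at most `A + r`, and it can
only reach a new minimum at a hyperbolic time, so after `n` steps `excess` is bounded below by
`-(A + r)` times the number of hyperbolic times up to `n`. Since the averages of `a` are
eventually below `-c`, `excess n ≤ -(c/2) n`, which forces at least `(c/2) / (A - c/2) · n`
hyperbolic times.
-/

open Filter Finset
open scoped Classical

/-- `r` plays the role of `log α`. -/
def IsHyperbolicTime (a : ℕ → ℝ) (r : ℝ) (m : ℕ) : Prop :=
  ∀ k ∈ Icc 1 m, ∑ j ∈ Icc (m - k + 1) m, a j ≤ k * r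

noncomputable def hyperbolicTimes (a : ℕ → ℝ) (r : ℝ) (n : ℕ) : Finset ℕ :=
  (Icc 1 n).filter (IsHyperbolicTime a r)

def excess (a : ℕ → ℝ) (r : ℝ) (n : ℕ) : ℝ :=
  ∑ j ∈ Icc 1 n, a j - n * r

section Pliss

variable {a : ℕ → ℝ} {r : ℝ}

lemma excess_sub_excess_sub {m k : ℕ} (hk : k ≤ m) :
    excess a r m - excess a r (m - k) = ∑ j ∈ Icc (m - k + 1) m, a j - k * r := by
  have hsplit := sum_Ioc_consecutive a (Nat.zero_le (m - k)) (Nat.sub_le m k)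
  simp only [excess, Nat.cast_sub hk, ← Icc_add_one_left_eq_Ioc, zero_add] at hsplit ⊢
  rw [← hsplit]
  ring

lemma excess_succ (n : ℕ) : excess a r (n + 1) = excess a r n + (a (n + 1) - r) := by
  have := excess_sub_excess_sub (a := a) (r := r) (Nat.le_add_left 1 n)
  simp only [Nat.add_sub_cancel, Icc_self, sum_singleton, Nat.cast_one, one_mul] at this
  linarith

lemma isHyperbolicTime_iff {m : ℕ} :
    IsHyperbolicTime a r m ↔ ∀ i < m, excess a r m ≤ excess a r i := by
  constructor
  · intro h i hi
    have hk := h (m - i) (mem_Icc.2 ⟨by omega, by omega⟩)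
    have := excess_sub_excess_sub (a := a) (r := r) (Nat.sub_le m i)
    rw [Nat.sub_sub_self hi.le] at hk this
    linarith
  · intro h k hk
    obtain ⟨hk1, hkm⟩ := mem_Icc.1 hk
    have := excess_sub_excess_sub (a := a) (r := r) hkm
    linarith [h (m - k) (by omega)]

lemma hyperbolicTimes_subset_succ (n : ℕ) :
    hyperbolicTimes a r n ⊆ hyperbolicTimes a r (n + 1) :=
  filter_subset_filter _ (Icc_subset_Icc_right n.le_succ)

lemma card_hyperbolicTimes_succ {n : ℕ} (h : IsHyperbolicTime a r (n + 1)) :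
    #(hyperbolicTimes a r (n + 1)) = #(hyperbolicTimes a r n) + 1 := by
  rw [hyperbolicTimes, ← insert_Icc_right_eq_Icc_add_one (by omega), filter_insert, if_pos h,
    card_insert_of_notMem (by simp)]
  rfl

lemma mul_card_hyperbolicTimes_le_excess {lo : ℝ} {n i : ℕ} (hr : lo ≤ r)
    (hlo : ∀ j ∈ Icc 1 n, lo ≤ a j) (hi : i ≤ n) :
    (lo - r) * #(hyperbolicTimes a r n) ≤ excess a r i := by
  induction n generalizing i with
  | zero => simp [Nat.le_zero.1 hi, hyperbolicTimes, excess]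
  | succ n ih =>
    have ih := fun {i} => ih (fun j hj => hlo j (Icc_subset_Icc_right n.le_succ hj)) (i := i)
    have hmono : (lo - r) * #(hyperbolicTimes a r (n + 1)) ≤ (lo - r) * #(hyperbolicTimes a r n) :=
      mul_le_mul_of_nonpos_left (by exact_mod_cast card_le_card (hyperbolicTimes_subset_succ n))
        (by linarith)
    rcases Nat.le_succ_iff.1 hi with hi | rfl
    · exact hmono.trans (ih hi)
    by_cases hyp : IsHyperbolicTime a r (n + 1)
    · have hstep : lo ≤ a (n + 1) := hlo (n + 1) (mem_Icc.2 ⟨by omega, le_rfl⟩)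
      rw [card_hyperbolicTimes_succ hyp, excess_succ]
      push_cast
      linarith [ih le_rfl]
    · obtain ⟨i, hi, hlt⟩ : ∃ i < n + 1, excess a r i < excess a r (n + 1) := by
        simpa [isHyperbolicTime_iff] using hyp
      linarith [ih (Nat.lt_succ_iff.1 hi)]

theorem pliss_lemma {lo s : ℝ} {n : ℕ} (hlo : ∀ j ∈ Icc 1 n, lo ≤ a j) (hr : lo < r)
    (hsum : ∑ j ∈ Icc 1 n, a j ≤ s * n) :
    (r - s) / (r - lo) * n ≤ #(hyperbolicTimes a r n) := by
  have := mul_card_hyperbolicTimes_le_excess hr.le hlo le_rfl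
  rw [excess] at this
  rw [div_mul_eq_mul_div, div_le_iff₀ (sub_pos.2 hr)]
  linarith

end Pliss

theorem pliss_hyperbolic_times_general (A c : ℝ) (hA : 0 < A) (hcA : c ≤ A)
    (a : ℕ → ℝ) (hbd : ∀ j, 1 ≤ j → |a j| ≤ A)
    (hls : Filter.limsup (fun n : ℕ => (∑ j ∈ Finset.Icc 1 n, a j) / n) Filter.atTop < -c) :
    ∃ N₀ : ℕ, ∀ n ≥ N₀,
      (c / (2 * A - c)) * n ≤
        ((Finset.Icc 1 n).filter (fun m =>
          ∀ k ∈ Finset.Icc 1 m,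
            ∑ j ∈ Finset.Icc (m - k + 1) m, a j ≤ (k : ℝ) * (-(c/2)))).card := by
  have hbdd : IsBoundedUnder (· ≤ ·) atTop fun n : ℕ => (∑ j ∈ Icc 1 n, a j) / n := by
    refine isBoundedUnder_of ⟨A, fun n => div_le_of_le_mul₀ n.cast_nonneg hA.le ?_⟩
    calc ∑ j ∈ Icc 1 n, a j ≤ ∑ _j ∈ Icc 1 n, A :=
          sum_le_sum fun j hj => le_of_abs_le (hbd j (mem_Icc.1 hj).1)
      _ = A * n := by simp [mul_comm]
  obtain ⟨N₀, hN₀⟩ := eventually_atTop.1 (eventually_lt_of_limsup_lt hls hbdd)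
  refine ⟨N₀, fun n hn => ?_⟩
  have hsum : ∑ j ∈ Icc 1 n, a j ≤ -c * n := by
    rcases n.eq_zero_or_pos with rfl | hpos
    · simp
    · exact ((div_lt_iff₀ (by exact_mod_cast hpos)).1 (hN₀ n hn)).le
  have hθ : (-(c / 2) - -c) / (-(c / 2) - -A) = c / (2 * A - c) := by
    rw [← mul_div_mul_left _ _ (two_ne_zero (α := ℝ))]
    ring_nf
  have := pliss_lemma (fun j hj => neg_le_of_abs_le (hbd j (mem_Icc.1 hj).1))
    (by linarith : -A < -(c / 2)) hsum
  rwa [hθ] at this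

theorem pliss_hyperbolic_times (A c : ℝ) (hA : 0 < A) (hc : 0 < c) (hcA : c ≤ A)
    (a : ℕ → ℝ) (hbd : ∀ j, 1 ≤ j → |a j| ≤ A)
    (hls : Filter.limsup (fun n : ℕ => (∑ j ∈ Finset.Icc 1 n, a j) / n) Filter.atTop < -c) :
    ∃ N₀ : ℕ, ∀ n ≥ N₀,
      (c / (2 * A - c)) * n ≤
        ((Finset.Icc 1 n).filter (fun m =>
          ∀ k ∈ Finset.Icc 1 m,
            ∑ j ∈ Finset.Icc (m - k + 1) m, a j ≤ (k : ℝ) * (-(c/2)))).card :=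
  pliss_hyperbolic_times_general A c hA hcA a hbd hls
end

section
/- Let 0 < α < 1, C₀ > 0, and let Q₁ ≥ 1 be an integer such that α^{1/2} + C₀·α^{Q₁/2} < 1. Then there exist C₁ > 0 and λ₁ ∈ (0,1) such that for every integer k ≥ 1: Σ_{p≥1} Σ C₀^{p}·α^{(n₁+⋯+n_p)/2} ≤ C₁·λ₁^{k}, where the inner sum is over all p-tuples of integers (n₁, …, n_p) with n_i ≥ Q₁ for every i and n₁ + ⋯ + n_p ≥ k/2. -/
open Finset

open scoped ENNReal Topology

lemma tsum_pi_fin_pow (G : ℝ≥0∞) (n : ℕ) :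
    (∑' g : Fin n → ℕ, G ^ (∑ i, g i)) = (∑' m : ℕ, G ^ m) ^ n := by
  induction n with
  | zero =>
    simp only [Finset.univ_eq_empty, Finset.sum_empty, pow_zero]
    exact tsum_eq_single default (fun b hb => absurd (Subsingleton.elim b default) hb)
  | succ n ih =>
    calc (∑' g : Fin (n+1) → ℕ, G ^ (∑ i, g i))
        = ∑' x : ℕ × (Fin n → ℕ), G ^ (∑ i, Fin.cons x.1 x.2 i) := by
          rw [← (Fin.consEquiv fun _ => ℕ).tsum_eq (fun g : Fin (n+1) → ℕ => G ^ (∑ i, g i))]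
          rfl
      _ = ∑' (a : ℕ) (g : Fin n → ℕ), G ^ a * G ^ (∑ i, g i) := by
          rw [ENNReal.tsum_prod']
          simp [Fin.sum_cons, pow_add]
      _ = (∑' m : ℕ, G ^ m) ^ (n+1) := by
          simp_rw [ENNReal.tsum_mul_left, ENNReal.tsum_mul_right, ih, pow_succ]
          ring

theorem generating_series_tail_estimate (α C₀ : ℝ) (hα0 : 0 < α) (hα1 : α < 1)
    (hC₀ : 0 < C₀) (Q₁ : ℕ) (hQ₁ : 1 ≤ Q₁)
    (hcond : α ^ ((1:ℝ)/2) + C₀ * α ^ ((Q₁ : ℝ)/2) < 1) :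
    ∃ C₁ > (0:ℝ), ∃ lam ∈ Set.Ioo (0:ℝ) 1, ∀ k : ℕ, 1 ≤ k →
      Summable (fun x : (Σ p : ℕ,
          {f : Fin (p + 1) → ℕ // (∀ i, Q₁ ≤ f i) ∧ (k : ℝ)/2 ≤ ∑ i, (f i : ℝ)}) =>
        C₀ ^ (x.1 + 1) * α ^ ((∑ i, (x.2.1 i : ℝ)) / 2)) ∧
      (∑' x : (Σ p : ℕ,
          {f : Fin (p + 1) → ℕ // (∀ i, Q₁ ≤ f i) ∧ (k : ℝ)/2 ≤ ∑ i, (f i : ℝ)}),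
        C₀ ^ (x.1 + 1) * α ^ ((∑ i, (x.2.1 i : ℝ)) / 2)) ≤ C₁ * lam ^ k := by
  -- abbreviations
  set β := α ^ ((1:ℝ)/2) with hβdef
  have hβ0 : 0 < β := Real.rpow_pos_of_pos hα0 _
  have hβQ : α ^ ((Q₁:ℝ)/2) = β ^ Q₁ := by
    rw [hβdef, ← Real.rpow_natCast (α ^ ((1:ℝ)/2)) Q₁, ← Real.rpow_mul hα0.le]
    ring_nf
  have hgβ : β + C₀ * β ^ Q₁ < 1 := by rw [← hβQ]; exact hcond
  have hβ1 : β < 1 := by nlinarith [pow_pos hβ0 Q₁]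
  -- choose γ ∈ (β, 1) with γ + C₀ γ^Q₁ < 1
  obtain ⟨γ, ⟨hγg, hγ1⟩, hβγ'⟩ : ∃ γ : ℝ, (γ + C₀ * γ ^ Q₁ < 1 ∧ γ < 1) ∧ γ ∈ Set.Ioi β := by
    have hc : ContinuousAt (fun x : ℝ => x + C₀ * x ^ Q₁) β := by fun_prop
    have h1 : ∀ᶠ x in 𝓝 β, x + C₀ * x ^ Q₁ < 1 :=
      hc.eventually_lt continuousAt_const hgβ
    have h2 : ∀ᶠ x in 𝓝[>] β, x + C₀ * x ^ Q₁ < 1 := nhdsWithin_le_nhds h1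
    have h3 : ∀ᶠ x in 𝓝[>] β, x < 1 := by
      filter_upwards [Ioo_mem_nhdsGT_of_mem ⟨le_refl β, hβ1⟩] with x hx using hx.2
    exact ((h2.and h3).and self_mem_nhdsWithin).exists
  have hβγ : β < γ := hβγ'
  have hγ0 : 0 < γ := hβ0.trans hβγ
  -- constants
  set lam := (β/γ) ^ ((1:ℝ)/2) with hlamdef
  have hdiv01 : 0 < β/γ := div_pos hβ0 hγ0
  have hdiv1 : β/γ < 1 := (div_lt_one hγ0).mpr hβγ
  have hlam0 : 0 < lam := Real.rpow_pos_of_pos hdiv01 _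
  have hlam1 : lam < 1 := Real.rpow_lt_one hdiv01.le hdiv1 (by norm_num)
  set r := C₀ * γ ^ Q₁ * (1 - γ)⁻¹ with hrdef
  have h1γ : 0 < 1 - γ := by linarith
  have hr0 : 0 < r := by positivity
  have hr1 : r < 1 := by
    rw [hrdef, ← div_eq_mul_inv, div_lt_one h1γ]
    linarith
  set C₁ := r * (1 - r)⁻¹ with hC₁def
  have h1r : 0 < 1 - r := by linarith
  have hC₁pos : 0 < C₁ := by positivity
  refine ⟨C₁, hC₁pos, lam, ⟨hlam0, hlam1⟩, fun k hk => ?_⟩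
  -- key pointwise inequality
  have key : ∀ (p : ℕ) (f : Fin (p+1) → ℕ), (∀ i, Q₁ ≤ f i) → ((k:ℝ)/2 ≤ ∑ i, (f i : ℝ)) →
      C₀ ^ (p+1) * α ^ ((∑ i, (f i : ℝ))/2) ≤
        lam ^ k * ((C₀ * γ ^ Q₁) ^ (p+1) * γ ^ (∑ i, (f i - Q₁))) := by
    intro p f hf1 hf2
    set N := ∑ i, f i with hN
    have hcast : ∑ i, (f i : ℝ) = (N : ℝ) := by push_cast [hN]; rfl
    have hsplit : (p+1) * Q₁ + ∑ i, (f i - Q₁) = N := by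
      calc (p+1) * Q₁ + ∑ i, (f i - Q₁)
          = ∑ _i : Fin (p+1), Q₁ + ∑ i, (f i - Q₁) := by simp [mul_comm]
        _ = ∑ i, (Q₁ + (f i - Q₁)) := Finset.sum_add_distrib.symm
        _ = N := Finset.sum_congr rfl fun i _ => by have := hf1 i; omega
    have hαN : α ^ ((∑ i, (f i : ℝ))/2) = β ^ N := by
      rw [hcast, hβdef, ← Real.rpow_natCast (α ^ ((1:ℝ)/2)) N, ← Real.rpow_mul hα0.le]
      ring_nf
    have hkey : β ^ N ≤ lam ^ k * γ ^ N := by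
      have h1 : (β/γ) ^ N ≤ lam ^ k := by
        have e1 : (β/γ) ^ N = (β/γ) ^ (N : ℝ) := (Real.rpow_natCast _ N).symm
        have e2 : lam ^ k = (β/γ) ^ ((k:ℝ)/2) := by
          rw [hlamdef, ← Real.rpow_natCast ((β/γ) ^ ((1:ℝ)/2)) k, ← Real.rpow_mul hdiv01.le]
          ring_nf
        rw [e1, e2]
        exact Real.rpow_le_rpow_of_exponent_ge hdiv01 hdiv1.le (by rw [← hcast]; exact hf2)
      calc β ^ N = (β/γ) ^ N * γ ^ N := by
            rw [div_pow, div_mul_cancel₀ _ (pow_ne_zero _ hγ0.ne')]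
        _ ≤ lam ^ k * γ ^ N := mul_le_mul_of_nonneg_right h1 (pow_nonneg hγ0.le N)
    calc C₀ ^ (p+1) * α ^ ((∑ i, (f i : ℝ))/2) = C₀ ^ (p+1) * β ^ N := by rw [hαN]
      _ ≤ C₀ ^ (p+1) * (lam ^ k * γ ^ N) :=
          mul_le_mul_of_nonneg_left hkey (pow_nonneg hC₀.le _)
      _ = lam ^ k * ((C₀ * γ ^ Q₁) ^ (p+1) * γ ^ (∑ i, (f i - Q₁))) := by
          rw [← hsplit, pow_add γ, pow_mul, mul_pow]
          ring
  -- ENNReal machinery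
  set S := fun p : ℕ => {f : Fin (p + 1) → ℕ // (∀ i, Q₁ ≤ f i) ∧ (k : ℝ)/2 ≤ ∑ i, (f i : ℝ)}
    with hSdef
  set g : (Σ p : ℕ, S p) → ℝ := fun x => C₀ ^ (x.1 + 1) * α ^ ((∑ i, (x.2.1 i : ℝ)) / 2)
    with hgdef
  have hg0 : ∀ x, 0 ≤ g x := fun x =>
    mul_nonneg (pow_nonneg hC₀.le _) (Real.rpow_nonneg hα0.le _)
  set G := ENNReal.ofReal γ with hGdef
  set c := ENNReal.ofReal (C₀ * γ ^ Q₁) with hcdef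
  set R := ENNReal.ofReal r with hRdef
  -- pointwise ENNReal bound
  have hpt : ∀ x : Σ p, S p, ENNReal.ofReal (g x) ≤
      ENNReal.ofReal (lam ^ k) * (c ^ (x.1 + 1) * G ^ (∑ i, (x.2.1 i - Q₁))) := by
    rintro ⟨p, f, hf1, hf2⟩
    have h := key p f hf1 hf2
    calc ENNReal.ofReal (g ⟨p, f, hf1, hf2⟩)
        ≤ ENNReal.ofReal (lam ^ k * ((C₀ * γ ^ Q₁) ^ (p+1) * γ ^ (∑ i, (f i - Q₁)))) :=
          ENNReal.ofReal_le_ofReal h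
      _ = ENNReal.ofReal (lam ^ k) * (c ^ (p + 1) * G ^ (∑ i, (f i - Q₁))) := by
          rw [ENNReal.ofReal_mul (by positivity), ENNReal.ofReal_mul (by positivity),
            hcdef, hGdef, ← ENNReal.ofReal_pow (by positivity), ← ENNReal.ofReal_pow hγ0.le]
  -- per-p sum bound
  have hperp : ∀ p : ℕ, (∑' f : S p, (c ^ (p + 1) * G ^ (∑ i, ((f : Fin (p+1) → ℕ) i - Q₁))))
      ≤ R ^ (p + 1) := by
    intro p
    have hinj : Function.Injective (fun f : S p => fun i => (f : Fin (p+1) → ℕ) i - Q₁) := by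
      rintro ⟨f₁, hf₁, _⟩ ⟨f₂, hf₂, _⟩ h
      have h1 : ∀ i, f₁ i - Q₁ = f₂ i - Q₁ := fun i => congrFun h i
      refine Subtype.ext (funext fun i => ?_)
      show f₁ i = f₂ i
      have h2 := hf₁ i
      have h3 := hf₂ i
      have h4 := h1 i
      omega
    calc (∑' f : S p, (c ^ (p + 1) * G ^ (∑ i, ((f : Fin (p+1) → ℕ) i - Q₁))))
        = c ^ (p + 1) * ∑' f : S p, G ^ (∑ i, ((f : Fin (p+1) → ℕ) i - Q₁)) :=
          ENNReal.tsum_mul_left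
      _ ≤ c ^ (p + 1) * ∑' h : Fin (p+1) → ℕ, G ^ (∑ i, h i) := by
          gcongr
          exact ENNReal.tsum_comp_le_tsum_of_injective hinj (fun h => G ^ (∑ i, h i))
      _ = c ^ (p + 1) * ((1 - G)⁻¹) ^ (p + 1) := by
          rw [tsum_pi_fin_pow, ENNReal.tsum_geometric]
      _ = R ^ (p + 1) := by
          rw [← mul_pow]
          congr 1
          rw [hGdef, hcdef, hRdef, hrdef]
          rw [show (1 : ℝ≥0∞) - ENNReal.ofReal γ = ENNReal.ofReal (1 - γ) by
            rw [ENNReal.ofReal_sub 1 hγ0.le, ENNReal.ofReal_one]]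
          rw [← ENNReal.ofReal_inv_of_pos h1γ, ← ENNReal.ofReal_mul (by positivity)]
  -- total bound
  have htot : (∑' x : Σ p, S p, ENNReal.ofReal (g x)) ≤ ENNReal.ofReal (C₁ * lam ^ k) := by
    calc (∑' x : Σ p, S p, ENNReal.ofReal (g x))
        ≤ ∑' x : Σ p, S p,
            ENNReal.ofReal (lam ^ k) * (c ^ (x.1 + 1) * G ^ (∑ i, (x.2.1 i - Q₁))) :=
          ENNReal.tsum_le_tsum hpt
      _ = ENNReal.ofReal (lam ^ k) *
            ∑' x : Σ p, S p, (c ^ (x.1 + 1) * G ^ (∑ i, (x.2.1 i - Q₁))) :=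
          ENNReal.tsum_mul_left
      _ = ENNReal.ofReal (lam ^ k) *
            ∑' (p : ℕ) (f : S p), (c ^ (p + 1) * G ^ (∑ i, ((f : Fin (p+1) → ℕ) i - Q₁))) := by
          rw [ENNReal.tsum_sigma']
      _ ≤ ENNReal.ofReal (lam ^ k) * ∑' p : ℕ, R ^ (p + 1) := by
          gcongr
          exact hperp _
      _ = ENNReal.ofReal (lam ^ k) * (R * (1 - R)⁻¹) := by
          congr 1
          simp_rw [pow_succ']
          rw [ENNReal.tsum_mul_left, ENNReal.tsum_geometric]
      _ = ENNReal.ofReal (C₁ * lam ^ k) := by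
          rw [hRdef, hC₁def]
          rw [show (1 : ℝ≥0∞) - ENNReal.ofReal r = ENNReal.ofReal (1 - r) by
            rw [ENNReal.ofReal_sub 1 hr0.le, ENNReal.ofReal_one]]
          rw [← ENNReal.ofReal_inv_of_pos h1r, ← ENNReal.ofReal_mul hr0.le,
            ← ENNReal.ofReal_mul (by positivity)]
          ring_nf
  have hne : (∑' x : Σ p, S p, ENNReal.ofReal (g x)) ≠ ∞ :=
    ne_top_of_le_ne_top ENNReal.ofReal_ne_top htot
  have hsumm : Summable g := by
    have := ENNReal.summable_toReal hne
    refine this.congr fun x => ?_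
    exact ENNReal.toReal_ofReal (hg0 x)
  refine ⟨hsumm, ?_⟩
  have heq : (∑' x : Σ p, S p, g x) = (∑' x : Σ p, S p, ENNReal.ofReal (g x)).toReal := by
    rw [ENNReal.tsum_toReal_eq (fun _ => ENNReal.ofReal_ne_top)]
    exact tsum_congr fun x => (ENNReal.toReal_ofReal (hg0 x)).symm
  calc (∑' x : Σ p, S p, g x)
      = (∑' x : Σ p, S p, ENNReal.ofReal (g x)).toReal := heq
    _ ≤ (ENNReal.ofReal (C₁ * lam ^ k)).toReal :=
        ENNReal.toReal_mono ENNReal.ofReal_ne_top htot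
    _ = C₁ * lam ^ k := ENNReal.toReal_ofReal (by positivity)
end

section
/- Let (X, 𝒜, μ) be a measure space, let C > 0, and let Z₀ ⊇ Z₁ ⊇ Z₂ ⊇ ⋯ be a decreasing sequence of measurable sets with μ(Z₀) < ∞. Assume that for every k ≥ 0 there exist a countable family (T_{k,i})_i of measurable sets and pairwise disjoint measurable sets ξ_{k,i} ⊆ Z_k \ Z_{k+1} such that Z_{k+1} ⊆ ⋃_i T_{k,i} and μ(T_{k,i}) ≤ C·μ(ξ_{k,i}) for every i. Then μ(Z_k) ≤ (C/(C+1))^{k}·μ(Z₀) for every k ≥ 0. -/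
open MeasureTheory

theorem core_satellite_geometric_decay {X : Type*} [MeasurableSpace X]
    (μ : Measure X) (C : ℝ) (hC : 0 < C)
    (Z : ℕ → Set X) (hZm : ∀ k, MeasurableSet (Z k))
    (hmono : ∀ k, Z (k + 1) ⊆ Z k) (hfin : μ (Z 0) < ⊤)
    (hstep : ∀ k : ℕ, ∃ T ξ : ℕ → Set X,
      (∀ i, MeasurableSet (T i)) ∧
      (∀ i, MeasurableSet (ξ i)) ∧
      Pairwise (Function.onFun Disjoint ξ) ∧
      (∀ i, ξ i ⊆ Z k \ Z (k + 1)) ∧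
      Z (k + 1) ⊆ ⋃ i, T i ∧
      (∀ i, μ (T i) ≤ ENNReal.ofReal C * μ (ξ i))) :
    ∀ k : ℕ, μ (Z k) ≤ ENNReal.ofReal ((C / (C + 1)) ^ k) * μ (Z 0) := by
  have hfin' : ∀ k, μ (Z k) < ⊤ := by
    intro k
    induction k with
    | zero => exact hfin
    | succ n ih => exact lt_of_le_of_lt (measure_mono (hmono n)) ih
  have hstep' : ∀ k, μ (Z (k + 1)) ≤ ENNReal.ofReal (C / (C + 1)) * μ (Z k) := by
    intro k
    obtain ⟨T, ξ, hTm, hξm, hdisj, hξsub, hcov, hbound⟩ := hstep k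
    have h1 : μ (Z (k + 1)) ≤ ENNReal.ofReal C * μ (⋃ i, ξ i) := by
      calc μ (Z (k + 1)) ≤ μ (⋃ i, T i) := measure_mono hcov
        _ ≤ ∑' i, μ (T i) := measure_iUnion_le T
        _ ≤ ∑' i, ENNReal.ofReal C * μ (ξ i) := ENNReal.tsum_le_tsum hbound
        _ = ENNReal.ofReal C * ∑' i, μ (ξ i) := ENNReal.tsum_mul_left
        _ = ENNReal.ofReal C * μ (⋃ i, ξ i) := by rw [measure_iUnion hdisj hξm]
    have h2 : μ (⋃ i, ξ i) ≤ μ (Z k \ Z (k + 1)) := measure_mono (Set.iUnion_subset hξsub)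
    have h3 : μ (Z k \ Z (k + 1)) = μ (Z k) - μ (Z (k + 1)) :=
      measure_diff (hmono k) (hZm (k + 1)).nullMeasurableSet (hfin' (k + 1)).ne
    set a := (μ (Z (k + 1))).toReal with ha_def
    set b := (μ (Z k)).toReal with hb_def
    have hab : μ (Z (k + 1)) ≤ μ (Z k) := measure_mono (hmono k)
    have ha : a ≤ C * (b - a) := by
      have h5 := h1.trans (mul_le_mul_right h2 _)
      rw [h3] at h5
      have hne : ENNReal.ofReal C * (μ (Z k) - μ (Z (k + 1))) ≠ ⊤ :=
        ENNReal.mul_ne_top ENNReal.ofReal_ne_top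
          (ne_top_of_le_ne_top (hfin' k).ne tsub_le_self)
      have h4 := ENNReal.toReal_mono hne h5
      rw [ENNReal.toReal_mul, ENNReal.toReal_ofReal hC.le,
        ENNReal.toReal_sub_of_le hab (hfin' k).ne] at h4
      exact h4
    have hb0 : (0:ℝ) ≤ b := ENNReal.toReal_nonneg
    have ha0 : (0:ℝ) ≤ a := ENNReal.toReal_nonneg
    have hkey : a ≤ C / (C + 1) * b := by
      rw [div_mul_eq_mul_div, le_div_iff₀ (by linarith)]
      nlinarith
    calc μ (Z (k + 1)) = ENNReal.ofReal a := (ENNReal.ofReal_toReal (hfin' (k + 1)).ne).symm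
      _ ≤ ENNReal.ofReal (C / (C + 1) * b) := ENNReal.ofReal_le_ofReal hkey
      _ = ENNReal.ofReal (C / (C + 1)) * μ (Z k) := by
          rw [ENNReal.ofReal_mul (by positivity), hb_def, ENNReal.ofReal_toReal (hfin' k).ne]
  intro k
  induction k with
  | zero => simp
  | succ n ih =>
    calc μ (Z (n + 1)) ≤ ENNReal.ofReal (C / (C + 1)) * μ (Z n) := hstep' n
      _ ≤ ENNReal.ofReal (C / (C + 1)) * (ENNReal.ofReal ((C / (C + 1)) ^ n) * μ (Z 0)) :=
          mul_le_mul_right ih _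
      _ = ENNReal.ofReal ((C / (C + 1)) ^ (n + 1)) * μ (Z 0) := by
          rw [← mul_assoc, ← ENNReal.ofReal_mul (by positivity), ← pow_succ']
end

section
/- Let (Ω, ℱ, P) be a probability space and σ : Ω → Ω a measurable measure-preserving map. Let n₁ : Ω → ℕ be measurable and suppose there are constants C, τ > 0 and d ∈ (0,1] such that P{ω : n₁(ω) ≥ m} ≤ C·e^{−τ·m^{d}} for all m ≥ 1. Fix c ∈ (0,1) and define n₂(ω) to be the least integer n ≥ 1 such that for every k > n and every j with k ≤ j ≤ 2k−1 one has n₁(σ^{j}ω) < k^{1−c} (and n₂(ω) = ∞ if no such n exists). Then n₂ is finite P-almost surely, and there exist constants C', τ' > 0 such that P{ω : n₂(ω) > n} ≤ C'·e^{−τ'·n^{(1−c)d}} for all n ≥ 1. -/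
open MeasureTheory Filter
open Real Set Asymptotics
open scoped Topology ENNReal

/-!
By stationarity, each event `k ^ (1 - c) ≤ n₁ (σ^[j] ω)` has probability at most
`C * exp (-τ * k ^ β)` with `β = (1 - c) * d`. The window of `k` has `k` indices, so a union
bound over `k > n` gives `∑_{k > n} k * C * exp (-τ * k ^ β)`. For `k > n` we split
`exp (-τ * k ^ β) ≤ exp (-(τ / 2) * n ^ β) * exp (-(τ / 2) * k ^ β)`, which leaves
`exp (-(τ / 2) * n ^ β)` times a convergent series. As this tends to `0`, the threshold is
almost surely finite.
-/

theorem tendsto_rpow_mul_exp_neg_mul_rpow_atTop_nhds_zero (s : ℝ) {a β : ℝ} (ha : 0 < a)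
    (hβ : 0 < β) : Tendsto (fun x : ℝ => x ^ s * exp (-a * x ^ β)) atTop (𝓝 0) := by
  refine ((tendsto_rpow_mul_exp_neg_mul_atTop_nhds_zero (s / β) a ha).comp
    (tendsto_rpow_atTop hβ)).congr' ?_
  filter_upwards [eventually_ge_atTop 0] with x hx
  rw [Function.comp_apply, ← rpow_mul hx, mul_div_cancel₀ s hβ.ne']

theorem summable_nat_rpow_mul_exp_neg_mul_rpow (s : ℝ) {a β : ℝ} (ha : 0 < a) (hβ : 0 < β) :
    Summable fun k : ℕ => (k : ℝ) ^ s * exp (-a * (k : ℝ) ^ β) := by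
  have hdecay : (fun x : ℝ => x ^ s * exp (-a * x ^ β)) =O[atTop] fun x => x ^ (-2 : ℝ) := by
    have := ((tendsto_rpow_mul_exp_neg_mul_rpow_atTop_nhds_zero (s + 2) ha hβ).isBigO_one ℝ).mul
      (isBigO_refl (fun x : ℝ => x ^ (-2 : ℝ)) atTop)
    refine this.congr' ?_ (by simp)
    filter_upwards [eventually_gt_atTop 0] with x hx
    rw [mul_right_comm, ← rpow_add hx, add_neg_cancel_right]
  exact summable_of_isBigO_nat (summable_nat_rpow.2 (by norm_num))
    (hdecay.comp_tendsto tendsto_natCast_atTop_atTop)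

theorem exp_neg_mul_rpow_le_mul {a β x y : ℝ} (ha : 0 ≤ a) (hβ : 0 ≤ β) (hx : 0 ≤ x)
    (hxy : x ≤ y) : exp (-a * y ^ β) ≤ exp (-(a / 2) * x ^ β) * exp (-(a / 2) * y ^ β) := by
  have : x ^ β ≤ y ^ β := rpow_le_rpow hx hxy hβ
  rw [← exp_add, exp_le_exp]
  nlinarith

theorem exists_tsum_indicator_Ioi_nat_mul_le {C a β : ℝ} (hC : 0 ≤ C) (ha : 0 < a) (hβ : 0 < β) :
    ∃ K > (0 : ℝ), ∀ n : ℕ,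
      ∑' k : ℕ,
          (Ioi n).indicator (fun k : ℕ => (k : ℝ≥0∞) * .ofReal (C * exp (-a * (k : ℝ) ^ β))) k
        ≤ .ofReal (K * exp (-(a / 2) * (n : ℝ) ^ β)) := by
  set g : ℕ → ℝ := fun k => k * (C * exp (-(a / 2) * (k : ℝ) ^ β))
  have hg : Summable g := by
    simpa [g, rpow_one, mul_left_comm] using
      (summable_nat_rpow_mul_exp_neg_mul_rpow 1 (half_pos ha) hβ).mul_left C
  have hg0 : ∀ k, 0 ≤ g k := fun k => by positivity
  refine ⟨max (∑' k, g k) 1, by positivity, fun n => ?_⟩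
  have hterm : ∀ k : ℕ, (Ioi n).indicator
      (fun k : ℕ => (k : ℝ≥0∞) * .ofReal (C * exp (-a * (k : ℝ) ^ β))) k
        ≤ .ofReal (exp (-(a / 2) * (n : ℝ) ^ β)) * .ofReal (g k) := by
    intro k
    by_cases hk : n < k
    · rw [indicator_of_mem (mem_Ioi.2 hk), ← ENNReal.ofReal_natCast,
        ← ENNReal.ofReal_mul (by positivity), ← ENNReal.ofReal_mul (by positivity)]
      refine ENNReal.ofReal_le_ofReal ?_
      have := exp_neg_mul_rpow_le_mul ha.le hβ.le (Nat.cast_nonneg n) (Nat.cast_le.2 hk.le)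
      calc (k : ℝ) * (C * exp (-a * (k : ℝ) ^ β))
          ≤ k * (C * (exp (-(a / 2) * (n : ℝ) ^ β) * exp (-(a / 2) * (k : ℝ) ^ β))) := by gcongr
        _ = exp (-(a / 2) * (n : ℝ) ^ β) * g k := by ring
    · rw [indicator_of_notMem (notMem_Ioi.2 (not_lt.1 hk))]
      exact zero_le
  calc _ ≤ ∑' k, .ofReal (exp (-(a / 2) * (n : ℝ) ^ β)) * .ofReal (g k) :=
        ENNReal.tsum_le_tsum hterm
    _ = .ofReal (exp (-(a / 2) * (n : ℝ) ^ β) * ∑' k, g k) := by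
        rw [ENNReal.tsum_mul_left, ← ENNReal.ofReal_tsum_of_nonneg hg0 hg,
          ENNReal.ofReal_mul (exp_nonneg _)]
    _ ≤ _ := by
        rw [mul_comm]
        gcongr
        exact le_max_left _ _

section Measure

variable {Ω : Type*} [MeasurableSpace Ω] (μ : Measure Ω)

theorem measure_biUnion_window_le (s : Set ℕ) (A : ℕ → ℕ → Set Ω) (b : ℕ → ℝ≥0∞)
    (hA : ∀ k ∈ s, ∀ j, μ (A k j) ≤ b k) :
    μ (⋃ k ∈ s, ⋃ j ∈ Finset.Ico k (2 * k), A k j)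
      ≤ ∑' k, s.indicator (fun k => (k : ℝ≥0∞) * b k) k := by
  rw [← tsum_subtype]
  refine (measure_biUnion_le μ s.to_countable _).trans (ENNReal.tsum_le_tsum fun k => ?_)
  have hcard : (Finset.Ico (k : ℕ) (2 * k)).card = k := by rw [Nat.card_Ico]; omega
  calc _ ≤ ∑ j ∈ Finset.Ico (k : ℕ) (2 * k), μ (A k j) := measure_biUnion_finset_le _ _
    _ ≤ (Finset.Ico (k : ℕ) (2 * k)).card • b k :=
        Finset.sum_le_card_nsmul _ _ _ fun j _ => hA k k.2 j
    _ = (k : ℝ≥0∞) * b k := by rw [hcard, nsmul_eq_mul]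

variable {μ}

theorem measure_le_natCast_le_of_tail {f : Ω → ℕ} {C τ d : ℝ} (hC : 0 ≤ C) (hτ : 0 ≤ τ)
    (hd : 0 ≤ d)
    (htail : ∀ m : ℕ, 1 ≤ m → μ {ω | m ≤ f ω} ≤ .ofReal (C * exp (-τ * (m : ℝ) ^ d)))
    {x : ℝ} (hx : 0 < x) : μ {ω | x ≤ f ω} ≤ .ofReal (C * exp (-τ * x ^ d)) := by
  have hset : {ω | x ≤ f ω} = {ω | ⌈x⌉₊ ≤ f ω} := by simp only [Nat.ceil_le]
  rw [hset]
  refine (htail _ (Nat.one_le_iff_ne_zero.2 (Nat.ceil_pos.2 hx).ne')).trans ?_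
  refine ENNReal.ofReal_le_ofReal (mul_le_mul_of_nonneg_left (exp_le_exp.2 ?_) hC)
  have := rpow_le_rpow hx.le (Nat.le_ceil x) hd
  nlinarith

theorem measure_eq_zero_of_forall_le_exp_neg {s : Set Ω} {K a β : ℝ} (ha : 0 < a) (hβ : 0 < β)
    (h : ∀ n : ℕ, 1 ≤ n → μ s ≤ .ofReal (K * exp (-a * (n : ℝ) ^ β))) : μ s = 0 := by
  have hdecay : Tendsto (fun n : ℕ => ENNReal.ofReal (K * exp (-a * (n : ℝ) ^ β))) atTop
      (𝓝 0) := by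
    have := ((tendsto_rpow_mul_exp_neg_mul_rpow_atTop_nhds_zero 0 ha hβ).comp
      tendsto_natCast_atTop_atTop).const_mul K
    simpa using ENNReal.tendsto_ofReal this
  exact nonpos_iff_eq_zero.1 (ge_of_tendsto hdecay ((eventually_ge_atTop 1).mono h))

end Measure

theorem random_threshold_stretched_exponential_tail_general {Ω : Type*} [MeasurableSpace Ω]
    (μ : Measure Ω)
    (σ : Ω → Ω) (hσ : MeasurePreserving σ μ μ)
    (n₁ : Ω → ℕ)
    (C τ d : ℝ) (hC : 0 < C) (hτ : 0 < τ) (hd0 : 0 < d)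
    (htail : ∀ m : ℕ, 1 ≤ m →
      μ {ω | m ≤ n₁ ω} ≤ ENNReal.ofReal (C * Real.exp (-τ * (m : ℝ) ^ d)))
    (c : ℝ) (hc1 : c < 1) :
    (∀ᵐ ω ∂μ, ∃ n : ℕ, 1 ≤ n ∧
      ∀ k > n, ∀ j : ℕ, k ≤ j → j ≤ 2 * k - 1 →
        ((n₁ (σ^[j] ω) : ℝ) < (k : ℝ) ^ (1 - c))) ∧
    ∃ C' > (0:ℝ), ∃ τ' > (0:ℝ), ∀ n : ℕ, 1 ≤ n →
      μ {ω | ¬ ∀ k > n, ∀ j : ℕ, k ≤ j → j ≤ 2 * k - 1 →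
          ((n₁ (σ^[j] ω) : ℝ) < (k : ℝ) ^ (1 - c))}
        ≤ ENNReal.ofReal (C' * Real.exp (-τ' * (n : ℝ) ^ ((1 - c) * d))) := by
  have hβ : 0 < (1 - c) * d := mul_pos (sub_pos.2 hc1) hd0
  obtain ⟨K, hK, hsum⟩ := exists_tsum_indicator_Ioi_nat_mul_le hC.le hτ hβ
  have hbad : ∀ n : ℕ, μ {ω | ¬ ∀ k > n, ∀ j : ℕ, k ≤ j → j ≤ 2 * k - 1 →
      ((n₁ (σ^[j] ω) : ℝ) < (k : ℝ) ^ (1 - c))}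
        ≤ ENNReal.ofReal (K * exp (-(τ / 2) * (n : ℝ) ^ ((1 - c) * d))) := by
    intro n
    refine le_trans (measure_mono ?_) ((measure_biUnion_window_le μ (Ioi n)
      (fun k j => σ^[j] ⁻¹' {ω | (k : ℝ) ^ (1 - c) ≤ n₁ ω}) _ fun k hk j => ?_).trans (hsum n))
    · intro ω hω
      push Not at hω
      obtain ⟨k, hk, j, hkj, hjk, hj⟩ := hω
      simp only [mem_iUnion, Finset.mem_Ico, mem_Ioi, mem_preimage]
      exact ⟨k, hk, j, ⟨hkj, by omega⟩, hj⟩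
    · have hk0 : (0 : ℝ) < k := Nat.cast_pos.2 (Nat.zero_lt_of_lt hk)
      refine ((hσ.iterate j).measure_preimage_le _).trans ?_
      rw [rpow_mul hk0.le]
      exact measure_le_natCast_le_of_tail hC.le hτ.le hd0.le htail (rpow_pos_of_pos hk0 _)
  refine ⟨?_, K, hK, τ / 2, half_pos hτ, fun n _ => hbad n⟩
  refine ae_iff.2 (measure_eq_zero_of_forall_le_exp_neg (half_pos hτ) hβ fun n hn =>
    (measure_mono fun ω hω => ?_).trans (hbad n))
  exact fun hgood => hω ⟨n, hn, hgood⟩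

theorem random_threshold_stretched_exponential_tail {Ω : Type*} [MeasurableSpace Ω]
    (μ : Measure Ω) [IsProbabilityMeasure μ]
    (σ : Ω → Ω) (hσ : MeasurePreserving σ μ μ)
    (n₁ : Ω → ℕ) (hn₁ : Measurable n₁)
    (C τ d : ℝ) (hC : 0 < C) (hτ : 0 < τ) (hd0 : 0 < d) (hd1 : d ≤ 1)
    (htail : ∀ m : ℕ, 1 ≤ m →
      μ {ω | m ≤ n₁ ω} ≤ ENNReal.ofReal (C * Real.exp (-τ * (m : ℝ) ^ d)))
    (c : ℝ) (hc0 : 0 < c) (hc1 : c < 1) :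
    (∀ᵐ ω ∂μ, ∃ n : ℕ, 1 ≤ n ∧
      ∀ k > n, ∀ j : ℕ, k ≤ j → j ≤ 2 * k - 1 →
        ((n₁ (σ^[j] ω) : ℝ) < (k : ℝ) ^ (1 - c))) ∧
    ∃ C' > (0:ℝ), ∃ τ' > (0:ℝ), ∀ n : ℕ, 1 ≤ n →
      μ {ω | ¬ ∀ k > n, ∀ j : ℕ, k ≤ j → j ≤ 2 * k - 1 →
          ((n₁ (σ^[j] ω) : ℝ) < (k : ℝ) ^ (1 - c))}
        ≤ ENNReal.ofReal (C' * Real.exp (-τ' * (n : ℝ) ^ ((1 - c) * d))) :=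
  random_threshold_stretched_exponential_tail_general μ σ hσ n₁ C τ d hC hτ hd0 htail c hc1
end
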